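/- arXiv:1707.02007 — 2 statements merged into one kernel-verified Lean document; each statement's English description precedes it below -/
import Mathlib

section
/- (Truncated V-fractional variation of constants, pure-derivative case.) Let n ≥ 0 be an integer, s > 0, and let f : (0,∞) → ℝ be continuous. Define y(t) = (1/n!) ∫_s^t ((t^α − τ^α)/(λα))^n f(τ) dωτ for t > 0. Then y is (n+1) times α-differentiable, D_α^{n+1} y(t) = f(t) for all t > 0, and D_α^j y(s) = 0 for every 0 ≤ j ≤ n. -/
open Real Set MeasureTheory Filter

noncomputable def poch (x y : ℝ) : ℝ := Real.Gamma (x + y) / Real.Gamma x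

noncomputable def vlam (γ β ρ δ p q : ℝ) : ℝ :=
  (Real.Gamma β * poch ρ q) / (Real.Gamma (γ + β) * poch δ p)

/-- Truncated V-fractional derivative `D_α f t = λ t^(1-α) f' t`. -/
noncomputable def Dal (γ β ρ δ p q α : ℝ) (f : ℝ → ℝ) : ℝ → ℝ :=
  fun t => vlam γ β ρ δ p q * t ^ (1 - α) * deriv f t

/-- `f` is `k` times α-differentiable. -/
def alphaDiff (γ β ρ δ p q α : ℝ) (k : ℕ) (f : ℝ → ℝ) : Prop :=
  ∀ j < k, DifferentiableOn ℝ ((Dal γ β ρ δ p q α)^[j] f) (Set.Ioi 0)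

/-- V-fractional integral `∫_a^b f dω = λ⁻¹ ∫_a^b f x · x^(α-1) dx`. -/
noncomputable def VInt (γ β ρ δ p q α : ℝ) (a b : ℝ) (f : ℝ → ℝ) : ℝ :=
  (vlam γ β ρ δ p q)⁻¹ * ∫ x in a..b, f x * x ^ (α - 1)

/-- Truncated V-fractional Taylor remainder with `m` terms; `R_{n,f} = Rtay (n+1)`. -/
noncomputable def Rtay (γ β ρ δ p q α : ℝ) (m : ℕ) (f : ℝ → ℝ) (t s : ℝ) : ℝ :=
  f s - ∑ k ∈ Finset.range m,
    ((Dal γ β ρ δ p q α)^[k] f t / (Nat.factorial k : ℝ)) *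
      ((s ^ α - t ^ α) / (vlam γ β ρ δ p q * α)) ^ k

/-!
With `v t = t ^ α / (λ α)` we have `dv = λ⁻¹ t ^ (α - 1) dt`, so `D_α = d/dv` and `dωτ = dv`:
`y` is Cauchy's formula for the `(n + 1)`-fold iterated integral of `f` with respect to `v`,
starting at `s`. Each application of `D_α` lowers the order by one, the last one returns `f`,
and every iterated integral vanishes at `s`. The `t`-derivative of
`∫ₛᵗ (v t - v x) ^ (m + 1) g x dx` is obtained by expanding the power binomially, which separates
the variables and reduces everything to the fundamental theorem of calculus.
-/

section RepeatedIntegral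

variable {I : Set ℝ} {u g : ℝ → ℝ} {s t : ℝ}

theorem hasDerivAt_integral_of_continuousOn {b : ℝ → ℝ} (hI : IsOpen I) (hst : uIcc s t ⊆ I)
    (hb : ContinuousOn b I) :
    HasDerivAt (fun τ => ∫ x in s..τ, b x) (b t) t :=
  have ht : t ∈ I := hst right_mem_uIcc
  intervalIntegral.integral_hasDerivAt_right ((hb.mono hst).intervalIntegrable)
    (hb.stronglyMeasurableAtFilter hI t ht) (hb.continuousAt (hI.mem_nhds ht))

theorem hasDerivAt_sum_mul_integral {ι : Type*} (S : Finset ι) {a b : ι → ℝ → ℝ} {a' : ι → ℝ}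
    (hI : IsOpen I) (hst : uIcc s t ⊆ I) (ha : ∀ i ∈ S, HasDerivAt (a i) (a' i) t)
    (hb : ∀ i ∈ S, ContinuousOn (b i) I) :
    HasDerivAt (fun τ => ∑ i ∈ S, a i τ * ∫ x in s..τ, b i x)
      (∑ i ∈ S, (a' i * (∫ x in s..t, b i x) + a i t * b i t)) t :=
  .fun_sum fun i hi => (ha i hi).fun_mul (hasDerivAt_integral_of_continuousOn hI hst (hb i hi))

/-- Cauchy's form of the `(m + 1)`-fold iterated integral of `g / u'` with respect to `u`. -/
noncomputable def repeatedIntegral (u g : ℝ → ℝ) (s : ℝ) (m : ℕ) (t : ℝ) : ℝ :=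
  ∫ x in s..t, (u t - u x) ^ m / m.factorial * g x

theorem repeatedIntegral_integrand_eq_sum (m : ℕ) (τ x : ℝ) :
    (u τ - u x) ^ m / m.factorial * g x =
      ∑ i ∈ Finset.range (m + 1),
        (m.choose i / m.factorial * u τ ^ i) * ((-u x) ^ (m - i) * g x) := by
  rw [sub_eq_add_neg, add_pow, Finset.sum_div, Finset.sum_mul]
  exact Finset.sum_congr rfl fun i _ => by ring

theorem repeatedIntegral_eq_sum (hI : I.OrdConnected) (hu : ContinuousOn u I)
    (hg : ContinuousOn g I) (hs : s ∈ I) (ht : t ∈ I) (m : ℕ) :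
    repeatedIntegral u g s m t =
      ∑ i ∈ Finset.range (m + 1),
        (m.choose i / m.factorial * u t ^ i) * ∫ x in s..t, (-u x) ^ (m - i) * g x := by
  have hint : ∀ i, IntervalIntegrable (fun x => (-u x) ^ (m - i) * g x) volume s t := fun i =>
    ((hu.neg.pow _).mul hg |>.mono (hI.uIcc_subset hs ht)).intervalIntegrable
  simp_rw [repeatedIntegral, repeatedIntegral_integrand_eq_sum,
    intervalIntegral.integral_finsetSum fun i _ => (hint i).const_mul _,
    intervalIntegral.integral_const_mul]

theorem hasDerivAt_repeatedIntegral_zero (hIo : IsOpen I) (hI : I.OrdConnected)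
    (hg : ContinuousOn g I) (hs : s ∈ I) (ht : t ∈ I) :
    HasDerivAt (repeatedIntegral u g s 0) (g t) t := by
  have hzero : repeatedIntegral u g s 0 = fun τ => ∫ x in s..τ, g x := by
    funext τ
    simp [repeatedIntegral]
  exact hzero ▸ hasDerivAt_integral_of_continuousOn hIo (hI.uIcc_subset hs ht) hg

theorem hasDerivAt_repeatedIntegral_succ {u't : ℝ} (hIo : IsOpen I) (hI : I.OrdConnected)
    (hu : ContinuousOn u I) (hut : HasDerivAt u u't t) (hg : ContinuousOn g I)
    (hs : s ∈ I) (ht : t ∈ I) (m : ℕ) :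
    HasDerivAt (repeatedIntegral u g s (m + 1)) (u't * repeatedIntegral u g s m t) t := by
  set M := m + 1
  set a : ℕ → ℝ → ℝ := fun i τ => M.choose i / M.factorial * u τ ^ i
  set a' : ℕ → ℝ := fun i => M.choose i / M.factorial * (i * u t ^ (i - 1) * u't)
  set b : ℕ → ℝ → ℝ := fun i x => (-u x) ^ (M - i) * g x
  have ha : ∀ i, HasDerivAt (a i) (a' i) t := fun i => (hut.fun_pow i).const_mul _
  have hb : ∀ i, ContinuousOn (b i) I := fun i => (hu.neg.pow _).mul hg
  -- `∑ a' i * b i x` is the `t`-derivative of the expanded kernel, so it equals that of the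
  -- closed form: no binomial identity is needed.
  have hkernel : ∀ x, ∑ i ∈ Finset.range (M + 1), a' i * b i x =
      u't * ((u t - u x) ^ m / m.factorial * g x) := by
    intro x
    have hsum : HasDerivAt (fun τ => ∑ i ∈ Finset.range (M + 1), a i τ * b i x)
        (∑ i ∈ Finset.range (M + 1), a' i * b i x) t :=
      .fun_sum fun i _ => (ha i).mul_const _
    have hpow : HasDerivAt (fun τ => (u τ - u x) ^ M / M.factorial * g x)
        (M * (u t - u x) ^ m * u't / M.factorial * g x) t :=
      (((hut.sub_const (u x)).fun_pow M).div_const _).mul_const _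
    simp only [a, b, ← repeatedIntegral_integrand_eq_sum] at hsum
    rw [hsum.unique hpow]
    simp only [M, Nat.factorial_succ]
    push_cast
    field_simp
  have hdiag : ∑ i ∈ Finset.range (M + 1), a i t * b i t = 0 := by
    simp [a, b, ← repeatedIntegral_integrand_eq_sum, M]
  have hderiv := hasDerivAt_sum_mul_integral (Finset.range (M + 1)) hIo (hI.uIcc_subset hs ht)
    (fun i _ => ha i) (fun i _ => hb i)
  rw [Finset.sum_add_distrib, hdiag, add_zero] at hderiv
  have heq : repeatedIntegral u g s M =ᶠ[nhds t]
      fun τ => ∑ i ∈ Finset.range (M + 1), a i τ * ∫ x in s..τ, b i x :=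
    eventually_of_mem (hIo.mem_nhds ht) fun τ hτ => repeatedIntegral_eq_sum hI hu hg hs hτ M
  refine (hderiv.congr_of_eventuallyEq heq).congr_deriv ?_
  have hint : ∀ i, IntervalIntegrable (b i) volume s t := fun i =>
    ((hb i).mono (hI.uIcc_subset hs ht)).intervalIntegrable
  simp_rw [← intervalIntegral.integral_const_mul, ← intervalIntegral.integral_finsetSum
    fun i _ => (hint i).const_mul _, hkernel, intervalIntegral.integral_const_mul, repeatedIntegral]

theorem differentiableOn_repeatedIntegral (hIo : IsOpen I) (hI : I.OrdConnected)
    (hu : DifferentiableOn ℝ u I) (hg : ContinuousOn g I) (hs : s ∈ I) (m : ℕ) :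
    DifferentiableOn ℝ (repeatedIntegral u g s m) I := by
  intro t ht
  have hut := (hu.differentiableAt (hIo.mem_nhds ht)).hasDerivAt
  cases m with
  | zero =>
    exact (hasDerivAt_repeatedIntegral_zero hIo hI hg hs ht).differentiableAt.differentiableWithinAt
  | succ m =>
    exact (hasDerivAt_repeatedIntegral_succ hIo hI hu.continuousOn hut hg hs ht m
      ).differentiableAt.differentiableWithinAt

theorem repeatedIntegral_self (m : ℕ) : repeatedIntegral u g s m s = 0 :=
  intervalIntegral.integral_same

end RepeatedIntegral

section VFractional

variable {γ β ρ δ p q α : ℝ}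

theorem poch_pos {x y : ℝ} (hx : 0 < x) (hy : 0 < y) : 0 < poch x y :=
  div_pos (Gamma_pos_of_pos (add_pos hx hy)) (Gamma_pos_of_pos hx)

theorem vlam_pos (hγ : 0 < γ) (hβ : 0 < β) (hρ : 0 < ρ) (hδ : 0 < δ) (hp : 0 < p) (hq : 0 < q) :
    0 < vlam γ β ρ δ p q :=
  div_pos (mul_pos (Gamma_pos_of_pos hβ) (poch_pos hρ hq))
    (mul_pos (Gamma_pos_of_pos (add_pos hγ hβ)) (poch_pos hδ hp))

theorem continuousOn_mul_const_mul_rpow {f : ℝ → ℝ} (hf : ContinuousOn f (Ioi 0)) (c α : ℝ) :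
    ContinuousOn (fun x => f x * (c * x ^ (α - 1))) (Ioi 0) :=
  hf.mul (continuousOn_const.mul (continuousOn_id.rpow_const fun _ hx => Or.inl (ne_of_gt hx)))

theorem Dal_eqOn_of_eqOn {F G : ℝ → ℝ} (h : EqOn F G (Ioi 0)) :
    EqOn (Dal γ β ρ δ p q α F) (Dal γ β ρ δ p q α G) (Ioi 0) := fun _ ht => by
  simp only [Dal, (Filter.eventuallyEq_of_mem (Ioi_mem_nhds ht) h).deriv_eq]

theorem Dal_apply_of_hasDerivAt {F : ℝ → ℝ} {c t : ℝ} (hL : vlam γ β ρ δ p q ≠ 0) (ht : 0 < t)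
    (hF : HasDerivAt F ((vlam γ β ρ δ p q)⁻¹ * t ^ (α - 1) * c) t) :
    Dal γ β ρ δ p q α F t = c := by
  have hpow : t ^ (1 - α) * t ^ (α - 1) = 1 := by
    rw [← rpow_add ht, sub_add_sub_cancel', sub_self, rpow_zero]
  rw [Dal, hF.deriv]
  field_simp
  linear_combination c * hpow

/-- The variable in which `D_α` is the ordinary derivative: `D_α F = (dF/dt) / (dv/dt)`. -/
noncomputable def vVar (L α t : ℝ) : ℝ := t ^ α / (L * α)

theorem hasDerivAt_vVar {L t : ℝ} (hα : α ≠ 0) (ht : 0 < t) :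
    HasDerivAt (vVar L α) (L⁻¹ * t ^ (α - 1)) t := by
  refine ((hasDerivAt_rpow_const (Or.inl ht.ne')).div_const (L * α)).congr_deriv ?_
  rcases eq_or_ne L 0 with rfl | hL
  · simp
  · field_simp

theorem differentiableOn_vVar {L : ℝ} (hα : α ≠ 0) : DifferentiableOn ℝ (vVar L α) (Ioi 0) :=
  fun _ ht => (hasDerivAt_vVar hα ht).differentiableAt.differentiableWithinAt

theorem Dal_repeatedIntegral_zero {f : ℝ → ℝ} {s t : ℝ} (hf : ContinuousOn f (Ioi 0))
    (hL : vlam γ β ρ δ p q ≠ 0) (hs : 0 < s) (ht : 0 < t) :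
    Dal γ β ρ δ p q α (repeatedIntegral (vVar (vlam γ β ρ δ p q) α)
      (fun x => f x * ((vlam γ β ρ δ p q)⁻¹ * x ^ (α - 1))) s 0) t = f t := by
  refine Dal_apply_of_hasDerivAt hL ht ?_
  exact (hasDerivAt_repeatedIntegral_zero isOpen_Ioi ordConnected_Ioi
    (continuousOn_mul_const_mul_rpow hf _ α) hs ht).congr_deriv (by ring)

theorem Dal_repeatedIntegral_succ {g : ℝ → ℝ} {s t : ℝ} (hg : ContinuousOn g (Ioi 0))
    (hL : vlam γ β ρ δ p q ≠ 0) (hα : α ≠ 0) (hs : 0 < s) (ht : 0 < t) (m : ℕ) :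
    Dal γ β ρ δ p q α (repeatedIntegral (vVar (vlam γ β ρ δ p q) α) g s (m + 1)) t =
      repeatedIntegral (vVar (vlam γ β ρ δ p q) α) g s m t :=
  Dal_apply_of_hasDerivAt hL ht <| hasDerivAt_repeatedIntegral_succ isOpen_Ioi ordConnected_Ioi
    (differentiableOn_vVar hα).continuousOn (hasDerivAt_vVar hα ht) hg hs ht m

theorem iterate_Dal_repeatedIntegral {g : ℝ → ℝ} {s : ℝ} (hg : ContinuousOn g (Ioi 0))
    (hL : vlam γ β ρ δ p q ≠ 0) (hα : α ≠ 0) (hs : 0 < s) {m j : ℕ} (hj : j ≤ m) :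
    EqOn ((Dal γ β ρ δ p q α)^[j] (repeatedIntegral (vVar (vlam γ β ρ δ p q) α) g s m))
      (repeatedIntegral (vVar (vlam γ β ρ δ p q) α) g s (m - j)) (Ioi 0) := by
  induction j with
  | zero => exact fun _ _ => rfl
  | succ j ih =>
    intro t ht
    obtain ⟨k, hk⟩ : ∃ k, m - j = k + 1 := ⟨m - (j + 1), by omega⟩
    rw [Function.iterate_succ_apply', Dal_eqOn_of_eqOn (ih (by omega)) ht, hk,
      Dal_repeatedIntegral_succ hg hL hα hs ht k]
    congr 1
    omega

end VFractional

theorem stmt1_general (γ β ρ δ p q α : ℝ) (hγ : 0 < γ) (hβ : 0 < β) (hρ : 0 < ρ) (hδ : 0 < δ)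
    (hp : 0 < p) (hq : 0 < q) (hα : 0 < α)
    (n : ℕ) (s : ℝ) (hs : 0 < s)
    (f : ℝ → ℝ) (hf : ContinuousOn f (Set.Ioi 0))
    (y : ℝ → ℝ)
    (hy : ∀ t : ℝ, y t = (1 / (Nat.factorial n : ℝ)) *
      VInt γ β ρ δ p q α s t (fun τ => ((t ^ α - τ ^ α) / (vlam γ β ρ δ p q * α)) ^ n * f τ)) :
    alphaDiff γ β ρ δ p q α (n + 1) y ∧
    (∀ t > (0 : ℝ), (Dal γ β ρ δ p q α)^[n + 1] y t = f t) ∧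
    (∀ j ≤ n, (Dal γ β ρ δ p q α)^[j] y s = 0) := by
  have hL := (vlam_pos hγ hβ hρ hδ hp hq).ne'
  set L := vlam γ β ρ δ p q
  set g := fun x : ℝ => f x * (L⁻¹ * x ^ (α - 1))
  have hg : ContinuousOn g (Ioi 0) := continuousOn_mul_const_mul_rpow hf L⁻¹ α
  obtain rfl : y = repeatedIntegral (vVar L α) g s n := by
    funext t
    rw [hy, VInt, ← intervalIntegral.integral_const_mul, ← intervalIntegral.integral_const_mul]
    refine intervalIntegral.integral_congr fun x _ => ?_
    simp only [vVar, g, ← sub_div]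
    ring
  have hiter := fun {j} (hj : j ≤ n) => iterate_Dal_repeatedIntegral hg hL hα.ne' hs hj
  refine ⟨fun j hj => ?_, fun t ht => ?_, fun j hj => ?_⟩
  · exact (differentiableOn_repeatedIntegral isOpen_Ioi ordConnected_Ioi
      (differentiableOn_vVar hα.ne') hg hs (n - j)).congr (hiter (by omega))
  · rw [Function.iterate_succ_apply', Dal_eqOn_of_eqOn (hiter le_rfl) ht, Nat.sub_self]
    exact Dal_repeatedIntegral_zero hf hL hs ht
  · rw [hiter hj hs, repeatedIntegral_self]

theorem stmt1 (γ β ρ δ p q α : ℝ) (hγ : 0 < γ) (hβ : 0 < β) (hρ : 0 < ρ) (hδ : 0 < δ)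
    (hp : 0 < p) (hq : 0 < q) (hα : 0 < α) (hα1 : α ≤ 1)
    (n : ℕ) (s : ℝ) (hs : 0 < s)
    (f : ℝ → ℝ) (hf : ContinuousOn f (Set.Ioi 0))
    (y : ℝ → ℝ)
    (hy : ∀ t : ℝ, y t = (1 / (Nat.factorial n : ℝ)) *
      VInt γ β ρ δ p q α s t (fun τ => ((t ^ α - τ ^ α) / (vlam γ β ρ δ p q * α)) ^ n * f τ)) :
    alphaDiff γ β ρ δ p q α (n + 1) y ∧
    (∀ t > (0 : ℝ), (Dal γ β ρ δ p q α)^[n + 1] y t = f t) ∧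
    (∀ j ≤ n, (Dal γ β ρ δ p q α)^[j] y s = 0) :=
  stmt1_general γ β ρ δ p q α hγ hβ hρ hδ hp hq hα n s hs f hf y hy
end

section
/- (The truncated V-fractional derivative of a differentiable function.) Let f : (0,∞) → ℝ be differentiable at t > 0. Then the limit lim_{ε→0} (f(t · ᵢH(ε t^{−α})) − f(t))/ε exists and equals λ · t^{1−α} · f′(t), where λ = Γ(β)(ρ)_q/(Γ(γ+β)(δ)_p). -/
open Real Set MeasureTheory Filter

/-- Truncated six-parameter Mittag-Leffler-type function. -/
noncomputable def iH (γ β ρ δ p q : ℝ) (i : ℕ) (z : ℝ) : ℝ :=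
  Real.Gamma β * ∑ k ∈ Finset.range (i + 1),
    (poch ρ (q * (k : ℝ)) / poch δ (p * (k : ℝ))) * z ^ k / Real.Gamma (γ * (k : ℝ) + β)

/-! The map `ε ↦ t · ᵢH(ε t^{-α})` takes the value `t` at `0`, and since only the linear term of
the truncated series survives differentiation at `0`, its derivative there is `λ t · t^{-α}`.
The limit is therefore the derivative at `0` of `f` composed with this map, by the chain rule. -/

open Topology

lemma poch_zero_right {x : ℝ} (hx : Real.Gamma x ≠ 0) : poch x 0 = 1 := by
  rw [poch, add_zero, div_self hx]

lemma iH_zero (γ p q : ℝ) {β ρ δ : ℝ} (hβ : Real.Gamma β ≠ 0) (hρ : Real.Gamma ρ ≠ 0)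
    (hδ : Real.Gamma δ ≠ 0) (i : ℕ) : iH γ β ρ δ p q i 0 = 1 := by
  rw [iH, Finset.sum_eq_single_of_mem 0 (Finset.mem_range.mpr i.succ_pos)
    fun k _ hk => by rw [zero_pow hk]; simp]
  simp [poch_zero_right hρ, poch_zero_right hδ, hβ]

lemma hasDerivAt_iH_zero (γ β ρ δ p q : ℝ) {i : ℕ} (hi : 1 ≤ i) :
    HasDerivAt (iH γ β ρ δ p q i) (vlam γ β ρ δ p q) 0 := by
  have hterms := (HasDerivAt.fun_sum (u := Finset.range (i + 1)) fun k _ =>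
    ((hasDerivAt_pow k (0 : ℝ)).const_mul
      (poch ρ (q * (k : ℝ)) / poch δ (p * (k : ℝ)))).div_const
      (Real.Gamma (γ * (k : ℝ) + β))).const_mul (Real.Gamma β)
  refine hterms.congr_deriv ?_
  rw [Finset.sum_eq_single_of_mem 1 (Finset.mem_range.mpr (by omega)) fun k _ hk => by
    rcases k with _ | _ | k <;> simp_all]
  simp [vlam]
  ring

lemma tendsto_div_sub_comp_mul_scale {f g : ℝ → ℝ} {L t c : ℝ} (hg : HasDerivAt g L 0)
    (hg0 : g 0 = 1) (hf : DifferentiableAt ℝ f t) :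
    Tendsto (fun ε : ℝ => (f (t * g (ε * c)) - f t) / ε) (𝓝[≠] 0)
      (𝓝 (L * (t * c) * deriv f t)) := by
  have hscaled : HasDerivAt (fun ε => t * g (ε * c)) (t * (L * c)) 0 := by
    simpa using (hg.comp_of_eq 0 (hasDerivAt_mul_const c) (zero_mul c).symm).const_mul t
  have hcomp : HasDerivAt (fun ε => f (t * g (ε * c))) (deriv f t * (t * (L * c))) 0 :=
    (by simpa [hg0] using hf.hasDerivAt : HasDerivAt f (deriv f t) (t * g (0 * c))).comp 0 hscaled
  rw [hasDerivAt_iff_tendsto_slope_zero] at hcomp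
  convert hcomp using 2 with ε
  · simp [hg0, div_eq_inv_mul]
  · ring

theorem stmt18_general (γ β ρ δ p q α : ℝ) (hβ : 0 < β) (hρ : 0 < ρ) (hδ : 0 < δ)
    (i : ℕ) (hi : 1 ≤ i) (t : ℝ) (ht : 0 < t)
    (f : ℝ → ℝ) (hf : DifferentiableAt ℝ f t) :
    Filter.Tendsto
      (fun ε : ℝ => (f (t * iH γ β ρ δ p q i (ε * t ^ (-α))) - f t) / ε)
      (nhdsWithin 0 {0}ᶜ)
      (nhds (vlam γ β ρ δ p q * t ^ (1 - α) * deriv f t)) := by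
  have hH0 := iH_zero γ p q (Real.Gamma_pos_of_pos hβ).ne' (Real.Gamma_pos_of_pos hρ).ne'
    (Real.Gamma_pos_of_pos hδ).ne' i
  have hpow : t * t ^ (-α) = t ^ (1 - α) := by
    rw [sub_eq_neg_add, Real.rpow_add_one ht.ne', mul_comm]
  rw [← hpow]
  exact tendsto_div_sub_comp_mul_scale (hasDerivAt_iH_zero γ β ρ δ p q hi) hH0 hf

theorem stmt18 (γ β ρ δ p q α : ℝ) (hγ : 0 < γ) (hβ : 0 < β) (hρ : 0 < ρ) (hδ : 0 < δ)
    (hp : 0 < p) (hq : 0 < q) (hα : 0 < α) (hα1 : α ≤ 1)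
    (i : ℕ) (hi : 1 ≤ i) (t : ℝ) (ht : 0 < t)
    (f : ℝ → ℝ) (hf : DifferentiableAt ℝ f t) :
    Filter.Tendsto
      (fun ε : ℝ => (f (t * iH γ β ρ δ p q i (ε * t ^ (-α))) - f t) / ε)
      (nhdsWithin 0 {0}ᶜ)
      (nhds (vlam γ β ρ δ p q * t ^ (1 - α) * deriv f t)) :=
  stmt18_general γ β ρ δ p q α hβ hρ hδ i hi t ht f hf
end
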